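/- For every natural number n, the numerator closure polynomial of the n-th ⊕-power of the bracket pair (1, 1) equals (x + 1)ⁿ + x² − 1. (This is the bracket polynomial of the numerator closure of the twist tangle [n].) -/

import Mathlib

open Polynomial

/-- Sum of bracket pairs: (a₁,b₁) ⊕ (a₂,b₂) = (a₁a₂, a₁b₂ + b₁a₂ + x·b₁b₂). -/
noncomputable def bpSum (p q : ℤ[X] × ℤ[X]) : ℤ[X] × ℤ[X] :=
  (p.1 * q.1, p.1 * q.2 + p.2 * q.1 + X * (p.2 * q.2))

/-- n-th ⊕-power of a bracket pair. -/
noncomputable def bpPow (p : ℤ[X] × ℤ[X]) : ℕ → ℤ[X] × ℤ[X]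
  | 0 => (1, 0)
  | n + 1 => bpSum p (bpPow p n)

/-- Denominator closure polynomial D(a,b) = x·a + x²·b. -/
noncomputable def bpD (p : ℤ[X] × ℤ[X]) : ℤ[X] := X * p.1 + X ^ 2 * p.2

/-- Numerator closure polynomial N(a,b) = x²·a + x·b. -/
noncomputable def bpN (p : ℤ[X] × ℤ[X]) : ℤ[X] := X ^ 2 * p.1 + X * p.2

/-- R-closure polynomial R(a,b) = N(a,b) + D(a,b). -/
noncomputable def bpR (p : ℤ[X] × ℤ[X]) : ℤ[X] := bpN p + bpD p

/-! The map (a, b) ↦ (a, a + x·b) turns ⊕ into the componentwise product, so the powers of any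
bracket pair are read off from ordinary powers of a and of a + x·b. For [n] = (1,1)^⊕n this gives
a = 1 and 1 + x·b = (x + 1)ⁿ. -/

lemma bpSum_fst (p q : ℤ[X] × ℤ[X]) : (bpSum p q).1 = p.1 * q.1 := rfl

lemma bpSum_fst_add_X_mul_snd (p q : ℤ[X] × ℤ[X]) :
    (bpSum p q).1 + X * (bpSum p q).2 = (p.1 + X * p.2) * (q.1 + X * q.2) := by
  simp only [bpSum]
  ring

lemma bpPow_fst (p : ℤ[X] × ℤ[X]) (n : ℕ) : (bpPow p n).1 = p.1 ^ n := by
  induction n with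
  | zero => rfl
  | succ n ih => rw [bpPow, bpSum_fst, ih, pow_succ']

lemma bpPow_fst_add_X_mul_snd (p : ℤ[X] × ℤ[X]) (n : ℕ) :
    (bpPow p n).1 + X * (bpPow p n).2 = (p.1 + X * p.2) ^ n := by
  induction n with
  | zero => simp [bpPow]
  | succ n ih => rw [bpPow, bpSum_fst_add_X_mul_snd, ih, pow_succ']

theorem twist_N (n : ℕ) :
    bpN (bpPow (1, 1) n) = (X + 1) ^ n + X ^ 2 - 1 := by
  have hfst : (bpPow (1, 1) n).1 = 1 := by rw [bpPow_fst, one_pow]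
  have hsum : 1 + X * (bpPow (1, 1) n).2 = (X + 1) ^ n := by
    simpa only [hfst, mul_one, add_comm 1 X] using bpPow_fst_add_X_mul_snd (1, 1) n
  rw [bpN, hfst]
  linear_combination hsum
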